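/- arXiv:hep-th/0101111 — 3 statements merged into one kernel-verified Lean document; each statement's English description precedes it below -/
import Mathlib

section
/- Let R be a (possibly noncommutative) unital ring and let D ∈ R. Suppose S is a subring of R such that D² commutes with every element of S (i.e. D²·a = a·D² for all a ∈ S). Then for every finite family of pairs (a_j, b_j) with a_j, b_j ∈ S satisfying Σ_j a_j·(D·b_j − b_j·D) = 0, one also has Σ_j (D·a_j − a_j·D)·(D·b_j − b_j·D) = 0. -/
/-!
For a single term, `[D, a] [D, b] = D ω + ω D - a [D², b]` with `ω = a [D, b]`. When `D²`
commutes with `b` the last term vanishes, so summing over `j` expresses the represented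
differential as `D ω + ω D` for the represented 1-form `ω = ∑ a_j [D, b_j]`, which is `0`.
-/

theorem commutator_mul_commutator {R : Type*} [Ring R] (D x y : R) :
    (D * x - x * D) * (D * y - y * D) =
      D * (x * (D * y - y * D)) + x * (D * y - y * D) * D - x * (D ^ 2 * y - y * D ^ 2) := by
  noncomm_ring

theorem junk_free_of_sq_commutes_general {R : Type*} [Ring R] (D : R) (S : Subring R)
    (hD : ∀ a ∈ S, D ^ 2 * a = a * D ^ 2)
    {ι : Type*} (s : Finset ι) (a b : ι → R)
    (hb : ∀ j ∈ s, b j ∈ S)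
    (h : ∑ j ∈ s, a j * (D * b j - b j * D) = 0) :
    ∑ j ∈ s, (D * a j - a j * D) * (D * b j - b j * D) = 0 := by
  have hterm : ∀ j ∈ s, (D * a j - a j * D) * (D * b j - b j * D) =
      D * (a j * (D * b j - b j * D)) + a j * (D * b j - b j * D) * D := fun j hj => by
    rw [commutator_mul_commutator, hD (b j) (hb j hj), sub_self, mul_zero, sub_zero]
  rw [Finset.sum_congr rfl hterm, Finset.sum_add_distrib, ← Finset.mul_sum, ← Finset.sum_mul, h,
    mul_zero, zero_mul, add_zero]

/-- Sufficient Junk-free condition in second order: if `D ^ 2` commutes with every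
element of a subring `S`, then any finite family `(a_j, b_j)` of elements of `S` with
`∑ j, a j * (D * b j - b j * D) = 0` also satisfies
`∑ j, (D * a j - a j * D) * (D * b j - b j * D) = 0`. -/
theorem junk_free_of_sq_commutes {R : Type*} [Ring R] (D : R) (S : Subring R)
    (hD : ∀ a ∈ S, D ^ 2 * a = a * D ^ 2)
    {ι : Type*} (s : Finset ι) (a b : ι → R)
    (ha : ∀ j ∈ s, a j ∈ S) (hb : ∀ j ∈ s, b j ∈ S)
    (h : ∑ j ∈ s, a j * (D * b j - b j * D) = 0) :
    ∑ j ∈ s, (D * a j - a j * D) * (D * b j - b j * D) = 0 :=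
  junk_free_of_sq_commutes_general D S hD s a b hb h
end

section
/- Let R be a unital ring, let D ∈ R, and suppose D² = c·1 for some central element c of R. Then for every finite family of pairs (a_j, b_j) of elements of R satisfying Σ_j a_j·(D·b_j − b_j·D) = 0, one also has Σ_j (D·a_j − a_j·D)·(D·b_j − b_j·D) = 0. -/
/-! Write `δ x = D * x - x * D`. Expanding, `δ a * δ b` and `D * (a * δ b) + (a * δ b) * D`
differ by `a * (D * D * b - b * (D * D))`, which vanishes when `D * D` is central. Hence
`∑ δ (a j) * δ (b j) = D * S + S * D` with `S = ∑ a j * δ (b j)`, and `S = 0` by hypothesis. -/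

theorem commutator_mul_commutator_of_commute_mul_self {R : Type*} [NonUnitalRing R]
    {D b : R} (hDb : Commute (D * D) b) (a : R) :
    (D * a - a * D) * (D * b - b * D) = D * (a * (D * b - b * D)) + a * (D * b - b * D) * D := by
  have hDDb : D * (D * b) = b * D * D := by rw [← mul_assoc, hDb.eq, mul_assoc]
  simp only [mul_sub, sub_mul, mul_assoc, hDDb]
  noncomm_ring

theorem sum_commutator_mul_commutator_eq_zero {R ι : Type*} [NonUnitalRing R] {D : R}
    (s : Finset ι) (a b : ι → R) (hD : ∀ j ∈ s, Commute (D * D) (b j))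
    (h : ∑ j ∈ s, a j * (D * b j - b j * D) = 0) :
    ∑ j ∈ s, (D * a j - a j * D) * (D * b j - b j * D) = 0 := by
  rw [Finset.sum_congr rfl fun j hj => commutator_mul_commutator_of_commute_mul_self (hD j hj) (a j),
    Finset.sum_add_distrib, ← Finset.mul_sum, ← Finset.sum_mul, h, mul_zero, zero_mul, add_zero]

/-- Junk-free condition when `D ^ 2 = c • 1` for a central element `c`: any finite
family `(a_j, b_j)` with `∑ j, a j * (D * b j - b j * D) = 0` also satisfies
`∑ j, (D * a j - a j * D) * (D * b j - b j * D) = 0`. -/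
theorem junk_free_of_sq_eq_central {R : Type*} [Ring R] (D c : R)
    (hc : ∀ x : R, c * x = x * c) (hD : D ^ 2 = c * 1)
    {ι : Type*} (s : Finset ι) (a b : ι → R)
    (h : ∑ j ∈ s, a j * (D * b j - b j * D) = 0) :
    ∑ j ∈ s, (D * a j - a j * D) * (D * b j - b j * D) = 0 := by
  have hDD : D * D = c := by rw [← pow_two, hD, mul_one]
  exact sum_commutator_mul_commutator_eq_zero s a b (fun j _ => hDD ▸ hc (b j)) h
end

section
/- Let d be a positive natural number, V a complex vector space, and γ⁺, γ⁻ : Fin d → End(V) linear maps satisfying the Cl(2d) relations: γ⁺_μ ∘ γ⁺_ν + γ⁺_ν ∘ γ⁺_μ = 0, γ⁻_μ ∘ γ⁻_ν + γ⁻_ν ∘ γ⁻_μ = 0, and γ⁺_μ ∘ γ⁻_ν + γ⁻_ν ∘ γ⁺_μ = δ_{μν}·id_V for all μ, ν. Define the operator D on functions ψ : ℤ^d → V by (Dψ)(x) = Σ_{μ=1}^{d} ( γ⁺_μ(ψ(x + ê_μ)) + γ⁻_μ(ψ(x − ê_μ)) ), where ê_μ ∈ ℤ^d is the μ-th standard unit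 vector. Then for every ψ : ℤ^d → V and every x ∈ ℤ^d, (D(Dψ))(x) = d · ψ(x). -/
/-!
Index the hops by `k ∈ κ = Fin d ⊕ Fin d`, so that `D = ∑ₖ Γₖ Tₖ` and
`D²ψ(x) = ∑ₖ ∑ₗ Γₖ Γₗ ψ(x + tₖ + tₗ)`. Since the shift `tₖ + tₗ` is symmetric in `k, l`,
`2 D²ψ(x) = ∑ₖ ∑ₗ {Γₖ, Γₗ} ψ(x + tₖ + tₗ)`, and the Clifford relations kill every anticommutator
except `{Γₖ, Γ_{σ k}} = 1`, where `σ` exchanges `+ê_μ` and `-ê_μ`. These opposite hops cancel,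
leaving `2 D²ψ(x) = |κ| ψ(x) = 2d ψ(x)`.
-/

open Finset

section DiracConnes

variable {G κ R V : Type*} [AddCommGroup G] [Fintype κ] [Semiring R] [AddCommGroup V]
  [Module R V]

def diracConnes (t : κ → G) (Γ : κ → Module.End R V) (ψ : G → V) (x : G) : V :=
  ∑ k, Γ k (ψ (x + t k))

theorem diracConnes_diracConnes_apply (t : κ → G) (Γ : κ → Module.End R V) (ψ : G → V)
    (x : G) :
    diracConnes t Γ (diracConnes t Γ ψ) x = ∑ k, ∑ l, Γ k (Γ l (ψ (x + t k + t l))) := by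
  simp only [diracConnes, map_sum]

theorem two_nsmul_diracConnes_diracConnes_apply [DecidableEq κ] {t : κ → G}
    {Γ : κ → Module.End R V} (σ : κ → κ) (ht : ∀ k, t (σ k) = -t k)
    (hΓ : ∀ k l, Γ k ∘ₗ Γ l + Γ l ∘ₗ Γ k = if l = σ k then LinearMap.id else 0)
    (ψ : G → V) (x : G) :
    2 • diracConnes t Γ (diracConnes t Γ ψ) x = Fintype.card κ • ψ x := by
  calc 2 • diracConnes t Γ (diracConnes t Γ ψ) x
      = ∑ k, ∑ l, (Γ k ∘ₗ Γ l + Γ l ∘ₗ Γ k) (ψ (x + t k + t l)) := by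
        rw [diracConnes_diracConnes_apply, two_nsmul]
        nth_rewrite 2 [sum_comm]
        simp only [← sum_add_distrib, add_right_comm x (t _) (t _), LinearMap.add_apply,
          LinearMap.comp_apply]
    _ = ∑ k, ψ (x + t k + t (σ k)) := by
      simp only [hΓ, apply_ite DFunLike.coe, ite_apply, LinearMap.id_apply,
        LinearMap.zero_apply, sum_ite_eq', mem_univ, if_true]
    _ = Fintype.card κ • ψ x := by simp [ht]

theorem diracConnes_diracConnes_apply_eq_nsmul [DecidableEq κ] [IsAddTorsionFree V]
    {t : κ → G} {Γ : κ → Module.End R V} (σ : κ → κ) (ht : ∀ k, t (σ k) = -t k)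
    (hΓ : ∀ k l, Γ k ∘ₗ Γ l + Γ l ∘ₗ Γ k = if l = σ k then LinearMap.id else 0)
    {n : ℕ} (hn : Fintype.card κ = 2 * n) (ψ : G → V) (x : G) :
    diracConnes t Γ (diracConnes t Γ ψ) x = n • ψ x := by
  rw [← (nsmul_right_injective two_ne_zero).eq_iff,
    two_nsmul_diracConnes_diracConnes_apply σ ht hΓ, hn, mul_nsmul']

end DiracConnes

section Lattice

variable {ι R V : Type*} [DecidableEq ι] [Semiring R] [AddCommGroup V] [Module R V]

/-- `Sum.inl μ` is the hop `+ê_μ` (carrying `γ⁺_μ`), `Sum.inr μ` the hop `-ê_μ` (carrying `γ⁻_μ`). -/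
def latticeHop : ι ⊕ ι → (ι → ℤ) :=
  Sum.elim (fun μ => Pi.single μ 1) (fun μ => -Pi.single μ 1)

theorem latticeHop_swap (k : ι ⊕ ι) : latticeHop k.swap = -latticeHop k := by
  cases k <;> simp [latticeHop]

theorem sumElim_anticomm {γp γm : ι → Module.End R V}
    (hpp : ∀ μ ν, γp μ ∘ₗ γp ν + γp ν ∘ₗ γp μ = 0)
    (hmm : ∀ μ ν, γm μ ∘ₗ γm ν + γm ν ∘ₗ γm μ = 0)
    (hpm : ∀ μ ν, γp μ ∘ₗ γm ν + γm ν ∘ₗ γp μ = if μ = ν then LinearMap.id else 0)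
    (k l : ι ⊕ ι) :
    Sum.elim γp γm k ∘ₗ Sum.elim γp γm l + Sum.elim γp γm l ∘ₗ Sum.elim γp γm k =
      if l = k.swap then LinearMap.id else 0 := by
  rcases k with μ | μ <;> rcases l with ν | ν
  · simp [hpp]
  · simp [hpm, eq_comm]
  · simp [add_comm, hpm]
  · simp [hmm]

end Lattice

theorem lattice_dirac_connes_sq_general {d : ℕ}
    {V : Type*} [AddCommGroup V] [Module ℂ V]
    (γp γm : Fin d → Module.End ℂ V)
    (hpp : ∀ μ ν, γp μ ∘ₗ γp ν + γp ν ∘ₗ γp μ = 0)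
    (hmm : ∀ μ ν, γm μ ∘ₗ γm ν + γm ν ∘ₗ γm μ = 0)
    (hpm : ∀ μ ν, γp μ ∘ₗ γm ν + γm ν ∘ₗ γp μ =
      if μ = ν then LinearMap.id else 0)
    (D : ((Fin d → ℤ) → V) → ((Fin d → ℤ) → V))
    (hD : ∀ (ψ : (Fin d → ℤ) → V) (x : Fin d → ℤ),
      D ψ x = ∑ μ, (γp μ (ψ (x + Pi.single μ 1)) + γm μ (ψ (x - Pi.single μ 1)))) :
    ∀ (ψ : (Fin d → ℤ) → V) (x : Fin d → ℤ), D (D ψ) x = d • ψ x := by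
  have hD' : D = diracConnes latticeHop (Sum.elim γp γm) := by
    ext ψ x
    simp [hD, diracConnes, latticeHop, Fintype.sum_sum_type, sum_add_distrib, sub_eq_add_neg]
  have : IsAddTorsionFree V := .of_isTorsionFree ℂ V
  intro ψ x
  rw [hD']
  exact diracConnes_diracConnes_apply_eq_nsmul Sum.swap latticeHop_swap
    (sumElim_anticomm hpp hmm hpm) (by simp [two_mul]) ψ x

/-- The Dirac–Connes operator `D = ∑_μ (Γ⁺_μ T⁺_μ + Γ⁻_μ T⁻_μ)` on the lattice `ℤ^d`,
built from endomorphisms satisfying the `Cl(2d)` relations, satisfies the geometric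
square-root condition `D² = d·1`. -/
theorem lattice_dirac_connes_sq {d : ℕ} (hd : 0 < d)
    {V : Type*} [AddCommGroup V] [Module ℂ V]
    (γp γm : Fin d → Module.End ℂ V)
    (hpp : ∀ μ ν, γp μ ∘ₗ γp ν + γp ν ∘ₗ γp μ = 0)
    (hmm : ∀ μ ν, γm μ ∘ₗ γm ν + γm ν ∘ₗ γm μ = 0)
    (hpm : ∀ μ ν, γp μ ∘ₗ γm ν + γm ν ∘ₗ γp μ =
      if μ = ν then LinearMap.id else 0)
    (D : ((Fin d → ℤ) → V) → ((Fin d → ℤ) → V))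
    (hD : ∀ (ψ : (Fin d → ℤ) → V) (x : Fin d → ℤ),
      D ψ x = ∑ μ, (γp μ (ψ (x + Pi.single μ 1)) + γm μ (ψ (x - Pi.single μ 1)))) :
    ∀ (ψ : (Fin d → ℤ) → V) (x : Fin d → ℤ), D (D ψ) x = d • ψ x :=
  lattice_dirac_connes_sq_general γp γm hpp hmm hpm D hD
end
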